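/- The path power sums {⃗p_μ : μ ⊢ n} form a basis of the vector space Λ_n of degree-n symmetric functions over ℂ. Indeed, expanding ⃗p_μ in classical power sums yields ⃗p_μ = p_μ + (terms p_ρ where ρ is obtained by merging at least two parts of μ), i.e. the transition matrix from {⃗p_μ} to {p_μ} is unitriangular with respect to the refinement order. -/

import Mathlib

open MvPolynomial

/-- The power sum `p_d = ∑ x_i^d` in `N` variables. -/
noncomputable def pow1 (N d : ℕ) : MvPolynomial (Fin N) ℂ := ∑ i : Fin N, (X i) ^ d

/-- The power sum `p_μ = ∏ p_{μ_i}` indexed by a multiset of parts. -/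
noncomputable def pProd (N : ℕ) (μ : Multiset ℕ) : MvPolynomial (Fin N) ℂ :=
  (μ.map (pow1 N)).prod

open Classical in
/-- The set partitions of `[r]`, as finsets of (nonempty, pairwise disjoint, covering)
blocks. -/
noncomputable def setPartitions (r : ℕ) : Finset (Finset (Finset (Fin r))) :=
  Finset.univ.filter (fun π => ∅ ∉ π ∧
    ∀ a : Fin r, ∃ B ∈ π, a ∈ B ∧ ∀ B' ∈ π, a ∈ B' → B' = B)

/-- The parts of a partition, as a list. -/
def sortedParts {n : ℕ} (P : Nat.Partition n) : List ℕ := P.parts.sort (· ≤ ·)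

lemma prod_pow1 (N : ℕ) (ds : List ℕ) :
    (ds.map (pow1 N)).prod =
      ∑ f : Fin ds.length → Fin N,
        monomial (∑ i, Finsupp.single (f i) (ds.get i)) (1 : ℂ) := by
  rw [← List.ofFn_getElem_eq_map, List.prod_ofFn]
  simp only [pow1]
  rw [Finset.prod_univ_sum, Fintype.piFinset_univ]
  refine Finset.sum_congr rfl fun f _ => ?_
  simp only [X_pow_eq_monomial]
  rw [monomial_sum_one]
  rfl

lemma coeff_prod_pow1 (N : ℕ) (ds : List ℕ) (m : Fin N →₀ ℕ) :
    coeff m (ds.map (pow1 N)).prod =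
      ((Finset.univ.filter (fun f : Fin ds.length → Fin N =>
        (∑ i, Finsupp.single (f i) (ds.get i)) = m)).card : ℂ) := by
  classical
  rw [prod_pow1, coeff_sum]
  simp only [coeff_monomial]
  rw [Finset.sum_boole]

-- support facts for sums of singles
lemma single_sum_apply {r N : ℕ} (f : Fin r → Fin N) (q : Fin r → ℕ)
    (j : Fin N) :
    (∑ i, Finsupp.single (f i) (q i)) j = ∑ i ∈ Finset.univ.filter (fun i => f i = j), q i := by
  classical
  rw [Finsupp.finset_sum_apply]
  rw [Finset.sum_filter]
  refine Finset.sum_congr rfl fun i _ => ?_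
  rw [Finsupp.single_apply]

lemma support_single_sum {r N : ℕ} (f : Fin r → Fin N) (q : Fin r → ℕ)
    (hq : ∀ i, 0 < q i) :
    (∑ i, Finsupp.single (f i) (q i)).support = Finset.univ.image f := by
  classical
  ext j
  simp only [Finsupp.mem_support_iff, Finset.mem_image, Finset.mem_univ, true_and]
  rw [single_sum_apply]
  constructor
  · intro h
    by_contra hc
    push_neg at hc
    apply h
    rw [Finset.sum_eq_zero]
    intro i hi
    exact absurd (Finset.mem_filter.mp hi).2 (hc i)
  · rintro ⟨i, rfl⟩
    refine ne_of_gt (Finset.sum_pos (fun j _ => hq j) ⟨i, ?_⟩)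
    simp

lemma single_sum_apply_inj {r N : ℕ} {f : Fin r → Fin N} (hf : Function.Injective f)
    (q : Fin r → ℕ) (i : Fin r) :
    (∑ k, Finsupp.single (f k) (q k)) (f i) = q i := by
  classical
  rw [single_sum_apply]
  rw [show Finset.univ.filter (fun k => f k = f i) = {i} by
    ext k; simp [hf.eq_iff]]
  simp

lemma map_support_single_sum {r N : ℕ} {f : Fin r → Fin N} (hf : Function.Injective f)
    (q : Fin r → ℕ) (hq : ∀ i, 0 < q i) :
    ((∑ i, Finsupp.single (f i) (q i)).support.val.map
      (fun j => (∑ i, Finsupp.single (f i) (q i)) j)) = Finset.univ.val.map q := by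
  classical
  rw [support_single_sum f q hq]
  rw [Finset.image_val_of_injOn (hf.injOn)]
  rw [Multiset.map_map]
  refine Finset.univ.val.map_congr rfl fun i _ => ?_
  exact single_sum_apply_inj hf q i

lemma sortedParts_coe {n : ℕ} (P : Nat.Partition n) : (↑(sortedParts P) : Multiset ℕ) = P.parts :=
  Multiset.sort_eq _ _

lemma sortedParts_pos {n : ℕ} (P : Nat.Partition n) (i : Fin (sortedParts P).length) :
    0 < (sortedParts P).get i :=
  P.parts_pos (by rw [← sortedParts_coe]; exact Multiset.mem_coe.mpr (List.get_mem _ i))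

lemma sortedParts_len_le {n : ℕ} (P : Nat.Partition n) : (sortedParts P).length ≤ n := by
  have h1 : (sortedParts P).length = Multiset.card P.parts := Multiset.length_sort _
  have h2 : Multiset.card P.parts • 1 ≤ P.parts.sum :=
    Multiset.card_nsmul_le_sum (fun x hx => P.parts_pos hx)
  rw [h1]
  simpa [P.parts_sum] using h2

lemma univ_val_map_get {α : Type*} (L : List α) :
    Finset.univ.val.map (L.get) = (↑L : Multiset α) := by
  have : Finset.univ.val = (↑(List.finRange L.length) : Multiset (Fin L.length)) := by
    rw [Fin.univ_def]
  rw [this]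
  rw [Multiset.map_coe]
  rw [← List.ofFn_eq_map, List.ofFn_get]

/-- The leading exponent of a partition. -/
noncomputable def EP {n : ℕ} (P : Nat.Partition n) : Fin n →₀ ℕ :=
  ∑ i : Fin (sortedParts P).length,
    Finsupp.single (Fin.castLE (sortedParts_len_le P) i) ((sortedParts P).get i)

lemma parts_map_eq {n : ℕ} (P : Nat.Partition n) :
    ((EP P).support.val.map (fun j => EP P j)) = P.parts := by
  rw [EP, map_support_single_sum (Fin.castLE_injective _) _ (sortedParts_pos P)]
  rw [univ_val_map_get, sortedParts_coe]

lemma keyB {n : ℕ} {P Q : Nat.Partition n}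
    (f : Fin (sortedParts Q).length → Fin n)
    (hf : (∑ i, Finsupp.single (f i) ((sortedParts Q).get i)) = EP P) :
    Multiset.card P.parts ≤ Multiset.card Q.parts ∧
      (Multiset.card P.parts = Multiset.card Q.parts → P = Q) := by
  classical
  have hsupp : (EP P).support = Finset.univ.image f := by
    rw [← hf]; exact support_single_sum f _ (sortedParts_pos Q)
  have hcardP : (EP P).support.card = Multiset.card P.parts := by
    rw [EP, support_single_sum _ _ (sortedParts_pos P),
      Finset.card_image_of_injective _ (Fin.castLE_injective _)]
    simp [sortedParts, Multiset.length_sort]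
    exact (Finset.card_fin _).trans (Multiset.length_sort _)
  have hle : Multiset.card P.parts ≤ Multiset.card Q.parts := by
    rw [← hcardP, hsupp]
    calc (Finset.univ.image f).card ≤ Finset.univ.card := Finset.card_image_le
    _ = (sortedParts Q).length := by simp
    _ = Multiset.card Q.parts := Multiset.length_sort _
  refine ⟨hle, fun heq => ?_⟩
  have hinj : Function.Injective f := by
    have hc : (Finset.univ.image f).card = (Finset.univ : Finset (Fin (sortedParts Q).length)).card := by
      rw [← hsupp, hcardP, heq]
      simp [Multiset.length_sort, sortedParts]
      exact ((Finset.card_fin _).trans (Multiset.length_sort _)).symm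
    have := Finset.injOn_of_card_image_eq (s := Finset.univ) (f := f) hc
    rw [Finset.coe_univ] at this
    exact Set.injOn_univ.mp this
  have h1 := map_support_single_sum hinj _ (sortedParts_pos Q)
  simp only [hf] at h1
  rw [parts_map_eq, univ_val_map_get, sortedParts_coe] at h1
  exact Nat.Partition.ext h1

lemma pProd_eq_list {n : ℕ} (Q : Nat.Partition n) :
    pProd n Q.parts = ((sortedParts Q).map (pow1 n)).prod := by
  rw [pProd, ← sortedParts_coe Q, Multiset.map_coe, Multiset.prod_coe]

lemma coeff_EP_self_ne {n : ℕ} (P : Nat.Partition n) :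
    coeff (EP P) (pProd n P.parts) ≠ 0 := by
  classical
  rw [pProd_eq_list, coeff_prod_pow1]
  have : (Fin.castLE (sortedParts_len_le P)) ∈
      (Finset.univ.filter (fun f : Fin (sortedParts P).length → Fin n =>
        (∑ i, Finsupp.single (f i) ((sortedParts P).get i)) = EP P)) := by
    simp [EP]
  have hne : (Finset.univ.filter (fun f : Fin (sortedParts P).length → Fin n =>
        (∑ i, Finsupp.single (f i) ((sortedParts P).get i)) = EP P)).card ≠ 0 :=
    Finset.card_ne_zero_of_mem this
  exact_mod_cast Nat.cast_ne_zero.mpr hne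

lemma coeff_EP_ne {n : ℕ} {P Q : Nat.Partition n}
    (h : coeff (EP P) (pProd n Q.parts) ≠ 0) :
    Multiset.card P.parts ≤ Multiset.card Q.parts ∧
      (Multiset.card P.parts = Multiset.card Q.parts → P = Q) := by
  classical
  rw [pProd_eq_list, coeff_prod_pow1] at h
  have hcard : (Finset.univ.filter (fun f : Fin (sortedParts Q).length → Fin n =>
        (∑ i, Finsupp.single (f i) ((sortedParts Q).get i)) = EP P)).card ≠ 0 := by
    intro hc; rw [hc] at h; simp at h
  obtain ⟨f, hf⟩ := Finset.card_ne_zero.mp hcard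
  exact keyB f (Finset.mem_filter.mp hf).2

lemma pProd_li (n : ℕ) :
    LinearIndependent ℂ (fun P : Nat.Partition n => pProd n P.parts) := by
  classical
  rw [Fintype.linearIndependent_iff]
  intro g hg
  by_contra hne
  push_neg at hne
  obtain ⟨i0, hi0⟩ := hne
  have hSne : (Finset.univ.filter (fun P : Nat.Partition n => g P ≠ 0)).Nonempty :=
    ⟨i0, by simp [hi0]⟩
  obtain ⟨P₀, hP₀S, hmax⟩ := Finset.exists_max_image _ (fun P => Multiset.card P.parts) hSne
  have hgP₀ : g P₀ ≠ 0 := (Finset.mem_filter.mp hP₀S).2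
  have h0 : (0 : ℂ) = ∑ P : Nat.Partition n, g P * coeff (EP P₀) (pProd n P.parts) := by
    have := congrArg (coeff (EP P₀)) hg
    rw [coeff_sum] at this
    simp only [coeff_smul, smul_eq_mul] at this
    rw [coeff_zero] at this
    rw [← this]
  rw [Finset.sum_eq_single P₀] at h0
  · exact hgP₀ (by
      have := h0.symm
      rcases mul_eq_zero.mp this with h | h
      · exact h
      · exact absurd h (coeff_EP_self_ne P₀))
  · intro P _ hPne
    by_cases hgP : g P = 0
    · rw [hgP, zero_mul]
    · by_cases hc : coeff (EP P₀) (pProd n P.parts) = 0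
      · rw [hc, mul_zero]
      · exfalso
        obtain ⟨hle, heq⟩ := coeff_EP_ne hc
        have : Multiset.card P.parts ≤ Multiset.card P₀.parts :=
          hmax P (Finset.mem_filter.mpr ⟨Finset.mem_univ P, hgP⟩)
        exact hPne (heq (le_antisymm hle this)).symm
  · intro h; exact absurd (Finset.mem_univ P₀) h

lemma tri {ι : Type*} [Fintype ι] {V : Type*} [AddCommGroup V] [Module ℂ V]
    (h : ι → ℕ) (v w : ι → V) (hw : LinearIndependent ℂ w)
    (hv : ∀ i, v i - w i ∈ Submodule.span ℂ {x | ∃ j, h j < h i ∧ x = w j}) :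
    LinearIndependent ℂ v ∧
      Submodule.span ℂ (Set.range v) = Submodule.span ℂ (Set.range w) := by
  have hsub : ∀ i, {x | ∃ j, h j < h i ∧ x = w j} ⊆ Set.range w := by
    rintro i x ⟨j, _, rfl⟩; exact ⟨j, rfl⟩
  have hvw : ∀ i, v i ∈ Submodule.span ℂ (Set.range w) := by
    intro i
    have h1 : v i - w i ∈ Submodule.span ℂ (Set.range w) :=
      Submodule.span_mono (hsub i) (hv i)
    have h2 : w i ∈ Submodule.span ℂ (Set.range w) := Submodule.subset_span ⟨i, rfl⟩
    simpa using Submodule.add_mem _ h1 h2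
  have hwv : ∀ i, w i ∈ Submodule.span ℂ (Set.range v) := by
    suffices H : ∀ k, ∀ i, h i = k → w i ∈ Submodule.span ℂ (Set.range v) by
      exact fun i => H (h i) i rfl
    intro k
    induction k using Nat.strong_induction_on with
    | _ k IH =>
      intro i hi
      have h1 : v i - w i ∈ Submodule.span ℂ (Set.range v) := by
        refine Submodule.span_le.mpr ?_ (hv i)
        rintro x ⟨j, hj, rfl⟩
        exact IH (h j) (hi ▸ hj) j rfl
      have h2 : v i ∈ Submodule.span ℂ (Set.range v) := Submodule.subset_span ⟨i, rfl⟩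
      simpa using Submodule.sub_mem _ h2 h1
  have hspan : Submodule.span ℂ (Set.range v) = Submodule.span ℂ (Set.range w) := by
    apply le_antisymm
    · rw [Submodule.span_le]; rintro x ⟨i, rfl⟩; exact hvw i
    · rw [Submodule.span_le]; rintro x ⟨i, rfl⟩; exact hwv i
  refine ⟨?_, hspan⟩
  rw [linearIndependent_iff_card_eq_finrank_span]
  rw [linearIndependent_iff_card_eq_finrank_span] at hw
  rw [hw]
  unfold Set.finrank
  rw [hspan]

lemma mem_sp {r : ℕ} {π : Finset (Finset (Fin r))} :
    π ∈ setPartitions r ↔ (∅ ∉ π ∧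
      ∀ a : Fin r, ∃ B ∈ π, a ∈ B ∧ ∀ B' ∈ π, a ∈ B' → B' = B) := by
  classical
  simp [setPartitions]

lemma sp_disj {r : ℕ} {π : Finset (Finset (Fin r))} (hπ : π ∈ setPartitions r) :
    (π : Set (Finset (Fin r))).PairwiseDisjoint id := by
  rw [mem_sp] at hπ
  intro B hB B' hB' hne
  simp only [Function.onFun, id]
  rw [Finset.disjoint_left]
  intro a haB haB'
  obtain ⟨C, hC, haC, hun⟩ := hπ.2 a
  exact hne ((hun B hB haB).trans (hun B' hB' haB').symm)

lemma sp_biUnion {r : ℕ} {π : Finset (Finset (Fin r))} (hπ : π ∈ setPartitions r) :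
    π.biUnion id = Finset.univ := by
  rw [mem_sp] at hπ
  ext a
  simp only [Finset.mem_biUnion, id, Finset.mem_univ, iff_true]
  obtain ⟨B, hB, haB, _⟩ := hπ.2 a
  exact ⟨B, hB, haB⟩

lemma sp_sum_card {r : ℕ} {π : Finset (Finset (Fin r))} (hπ : π ∈ setPartitions r) :
    ∑ B ∈ π, B.card = r := by
  classical
  have := Finset.card_biUnion (s := π) (t := id)
    (fun B hB B' hB' hne => sp_disj hπ hB hB' hne)
  rw [sp_biUnion hπ] at this
  simpa using this.symm

lemma sp_sum_sum {r : ℕ} {π : Finset (Finset (Fin r))} (hπ : π ∈ setPartitions r)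
    (μ : Fin r → ℕ) : ∑ B ∈ π, ∑ i ∈ B, μ i = ∑ i, μ i := by
  classical
  have := Finset.sum_biUnion (s := π) (t := id) (f := μ) (sp_disj hπ)
  rw [sp_biUnion hπ] at this
  exact this.symm

lemma sp_card_pos {r : ℕ} {π : Finset (Finset (Fin r))} (hπ : π ∈ setPartitions r)
    {B : Finset (Fin r)} (hB : B ∈ π) : 0 < B.card := by
  rw [mem_sp] at hπ
  rcases Finset.eq_empty_or_nonempty B with rfl | hne
  · exact absurd hB hπ.1
  · exact Finset.card_pos.mpr hne

def sp0 (r : ℕ) : Finset (Finset (Fin r)) :=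
  Finset.univ.image (fun i => ({i} : Finset (Fin r)))

lemma sp0_mem (r : ℕ) : sp0 r ∈ setPartitions r := by
  rw [mem_sp]
  constructor
  · intro h
    obtain ⟨i, _, hi⟩ := Finset.mem_image.mp h
    exact (Finset.singleton_ne_empty i) hi
  · intro a
    refine ⟨{a}, Finset.mem_image.mpr ⟨a, Finset.mem_univ a, rfl⟩, Finset.mem_singleton_self a, ?_⟩
    intro B' hB' haB'
    obtain ⟨b, _, rfl⟩ := Finset.mem_image.mp hB'
    rw [Finset.mem_singleton] at haB'
    rw [haB']

lemma sp_eq_sp0 {r : ℕ} {π : Finset (Finset (Fin r))} (hπ : π ∈ setPartitions r)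
    (hcard : ∀ B ∈ π, B.card ≤ 1) : π = sp0 r := by
  have hsing : ∀ B ∈ π, ∃ b, B = {b} := by
    intro B hB
    exact Finset.card_eq_one.mp (le_antisymm (hcard B hB) (sp_card_pos hπ hB))
  ext B
  rw [mem_sp] at hπ
  constructor
  · intro hB
    obtain ⟨b, rfl⟩ := hsing B hB
    exact Finset.mem_image.mpr ⟨b, Finset.mem_univ b, rfl⟩
  · intro hB
    obtain ⟨b, _, rfl⟩ := Finset.mem_image.mp hB
    obtain ⟨C, hC, hbC, _⟩ := hπ.2 b
    obtain ⟨c, rfl⟩ := hsing C hC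
    rw [Finset.mem_singleton] at hbC
    rw [← hbC] at hC
    exact hC

lemma sp_big_block {r : ℕ} {π : Finset (Finset (Fin r))} (hπ : π ∈ setPartitions r)
    (hne : π ≠ sp0 r) : ∃ B ∈ π, 2 ≤ B.card := by
  by_contra h
  push_neg at h
  exact hne (sp_eq_sp0 hπ (fun B hB => Nat.lt_succ_iff.mp (h B hB)))

lemma sp_card_lt {r : ℕ} {π : Finset (Finset (Fin r))} (hπ : π ∈ setPartitions r)
    {B₀ : Finset (Fin r)} (hB₀ : B₀ ∈ π) (h2 : 2 ≤ B₀.card) : π.card < r := by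
  have : ∑ B ∈ π, 1 < ∑ B ∈ π, B.card :=
    Finset.sum_lt_sum (fun B hB => sp_card_pos hπ hB) ⟨B₀, hB₀, h2⟩
  simpa [sp_sum_card hπ] using this

/-- The merged partition associated to a set partition of the index set. -/
noncomputable def mergedQ {n : ℕ} (P : Nat.Partition n)
    {π : Finset (Finset (Fin (sortedParts P).length))}
    (hπ : π ∈ setPartitions (sortedParts P).length) : Nat.Partition n where
  parts := π.val.map (fun B => ∑ i ∈ B, (sortedParts P).get i)
  parts_pos := by
    intro d hd
    obtain ⟨B, hB, rfl⟩ := Multiset.mem_map.mp hd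
    have hBπ : B ∈ π := hB
    refine Finset.sum_pos (fun i _ => sortedParts_pos P i) ?_
    exact Finset.card_pos.mp (sp_card_pos hπ hBπ)
  parts_sum := by
    have h1 : (π.val.map (fun B => ∑ i ∈ B, (sortedParts P).get i)).sum
        = ∑ B ∈ π, ∑ i ∈ B, (sortedParts P).get i := rfl
    rw [h1, sp_sum_sum hπ]
    have h2 : ∑ i, (sortedParts P).get i = ((↑(sortedParts P) : Multiset ℕ)).sum := by
      rw [← univ_val_map_get]
      rfl
    rw [h2, sortedParts_coe, P.parts_sum]

lemma mergedQ_parts {n : ℕ} (P : Nat.Partition n)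
    {π : Finset (Finset (Fin (sortedParts P).length))}
    (hπ : π ∈ setPartitions (sortedParts P).length) :
    (mergedQ P hπ).parts = π.val.map (fun B => ∑ i ∈ B, (sortedParts P).get i) := rfl

lemma term_eq {n N : ℕ} (P : Nat.Partition n)
    {π : Finset (Finset (Fin (sortedParts P).length))}
    (hπ : π ∈ setPartitions (sortedParts P).length) :
    (∏ B ∈ π, (((B.card - 1).factorial : MvPolynomial (Fin N) ℂ) *
      pow1 N (∑ i ∈ B, (sortedParts P).get i))) =
    ((∏ B ∈ π, (B.card - 1).factorial : ℕ) : ℂ) •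
      pProd N (π.val.map (fun B => ∑ i ∈ B, (sortedParts P).get i)) := by
  rw [Finset.prod_mul_distrib]
  have h1 : (∏ B ∈ π, ((B.card - 1).factorial : MvPolynomial (Fin N) ℂ))
      = ((∏ B ∈ π, (B.card - 1).factorial : ℕ) : MvPolynomial (Fin N) ℂ) := by
    push_cast; ring
  have h2 : (∏ B ∈ π, pow1 N (∑ i ∈ B, (sortedParts P).get i))
      = pProd N (π.val.map (fun B => ∑ i ∈ B, (sortedParts P).get i)) := by
    rw [pProd, Multiset.map_map]
    rfl
  rw [h1, h2]
  rw [MvPolynomial.smul_eq_C_mul, map_natCast]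

lemma term_sp0 {n : ℕ} (P : Nat.Partition n) :
    (∏ B ∈ sp0 (sortedParts P).length,
      (((B.card - 1).factorial : MvPolynomial (Fin n) ℂ) *
        pow1 n (∑ i ∈ B, (sortedParts P).get i))) = pProd n P.parts := by
  classical
  rw [sp0, Finset.prod_image (fun i _ j _ h => Finset.singleton_injective h)]
  simp only [Finset.card_singleton, Finset.sum_singleton]
  norm_num
  rw [pProd_eq_list, ← List.ofFn_getElem_eq_map, List.prod_ofFn]

/-- The path power sum `⃗p_μ := ∑_{π ∈ Π_r} ∏_{B ∈ π} (|B|−1)! · p_{μ_B}`,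
in `N` variables, for `μ ⊢ n` with `r = ℓ(μ)` parts. -/
noncomputable def vp {n : ℕ} (N : ℕ) (P : Nat.Partition n) : MvPolynomial (Fin N) ℂ :=
  ∑ π ∈ setPartitions (sortedParts P).length, ∏ B ∈ π,
    (((B.card - 1).factorial : MvPolynomial (Fin N) ℂ) *
      pow1 N (∑ i ∈ B, (sortedParts P).get i))

lemma vp_sub {n : ℕ} (P : Nat.Partition n) :
    vp n P - pProd n P.parts ∈
      Submodule.span ℂ {f : MvPolynomial (Fin n) ℂ | ∃ Q : Nat.Partition n,
        ((∃ π ∈ setPartitions (sortedParts P).length, (∃ B ∈ π, 2 ≤ B.card) ∧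
          Q.parts = π.val.map (fun B => ∑ i ∈ B, (sortedParts P).get i)) ∧
          Multiset.card Q.parts < Multiset.card P.parts) ∧
        f = pProd n Q.parts} := by
  classical
  have hmem := sp0_mem (sortedParts P).length
  have hsplit := Finset.add_sum_erase _ (fun π => ∏ B ∈ π,
    (((B.card - 1).factorial : MvPolynomial (Fin n) ℂ) *
      pow1 n (∑ i ∈ B, (sortedParts P).get i))) hmem
  have hvp : vp n P = pProd n P.parts +
      ∑ π ∈ (setPartitions (sortedParts P).length).erase (sp0 _), ∏ B ∈ π,
        (((B.card - 1).factorial : MvPolynomial (Fin n) ℂ) *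
          pow1 n (∑ i ∈ B, (sortedParts P).get i)) := by
    rw [vp, ← hsplit, term_sp0]
  rw [hvp, add_sub_cancel_left]
  refine Submodule.sum_mem _ (fun π hπe => ?_)
  have hπ : π ∈ setPartitions (sortedParts P).length := Finset.mem_of_mem_erase hπe
  have hne : π ≠ sp0 _ := Finset.ne_of_mem_erase hπe
  obtain ⟨B₀, hB₀, h2⟩ := sp_big_block hπ hne
  rw [term_eq P hπ]
  refine Submodule.smul_mem _ _ (Submodule.subset_span ?_)
  refine ⟨mergedQ P hπ, ⟨⟨π, hπ, ⟨B₀, hB₀, h2⟩, mergedQ_parts P hπ⟩, ?_⟩, ?_⟩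
  · rw [mergedQ_parts, Multiset.card_map]
    have h3 := sp_card_lt hπ hB₀ h2
    exact h3.trans_eq (Multiset.length_sort _)
  · rw [mergedQ_parts]

/-- The path power sums `{⃗p_μ : μ ⊢ n}` are a basis of `Λ_n` (realized in `n`
variables): they are linearly independent and span the same space as the classical
power sums `{p_μ : μ ⊢ n}`.  Moreover the transition matrix is unitriangular:
`⃗p_μ − p_μ` lies in the span of the `p_ρ` where `ρ` is obtained from `μ` by merging
parts according to a set partition with at least one block of size `≥ 2`. -/
theorem stmt16 (n : ℕ) (hn : 1 ≤ n) :
    LinearIndependent ℂ (fun P : Nat.Partition n => vp n P) ∧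
    Submodule.span ℂ (Set.range fun P : Nat.Partition n => vp n P) =
      Submodule.span ℂ (Set.range fun P : Nat.Partition n => pProd n P.parts) ∧
    ∀ P : Nat.Partition n, vp n P - pProd n P.parts ∈
      Submodule.span ℂ {f : MvPolynomial (Fin n) ℂ | ∃ Q : Nat.Partition n,
        (∃ π ∈ setPartitions (sortedParts P).length, (∃ B ∈ π, 2 ≤ B.card) ∧
          Q.parts = π.val.map (fun B => ∑ i ∈ B, (sortedParts P).get i)) ∧
        f = pProd n Q.parts} := by
  have hw := pProd_li n
  have hv : ∀ P : Nat.Partition n, vp n P - pProd n P.parts ∈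
      Submodule.span ℂ {x : MvPolynomial (Fin n) ℂ | ∃ Q : Nat.Partition n,
        Multiset.card Q.parts < Multiset.card P.parts ∧ x = pProd n Q.parts} := by
    intro P
    refine Submodule.span_mono ?_ (vp_sub P)
    rintro x ⟨Q, ⟨_, hlt⟩, rfl⟩
    exact ⟨Q, hlt, rfl⟩
  obtain ⟨hli, hspan⟩ := tri (fun P : Nat.Partition n => Multiset.card P.parts)
    (fun P => vp n P) (fun P => pProd n P.parts) hw hv
  refine ⟨hli, hspan, fun P => ?_⟩
  refine Submodule.span_mono ?_ (vp_sub P)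
  rintro x ⟨Q, ⟨hex, _⟩, rfl⟩
  exact ⟨Q, hex, rfl⟩
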